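/- arXiv:2101.11557 — 6 statements merged into one kernel-verified Lean document; each statement's English description precedes it below -/
import Mathlib

section
/- Let f : ℝ^d → ℝ be a Borel function with essential infimum f* > -∞ and e^{-f} ∈ L¹(ℝ^d). For t > 0 let π_t be the probability measure with density proportional to e^{-f(x)/t}. Then for every ε > 0, π_t({x : f(x) ≥ f* + ε}) → 0 as t → 0. -/
open MeasureTheory Topology Filter

/-!
Write `f* = essinf f` and fix `f* < a < b = f* + ε`. On `{b ≤ f}` and for `t ≤ 1`,
`exp (-f/t) ≤ exp (-b (1/t - 1)) exp (-f)`, so the unnormalised mass of `{b ≤ f}` is at most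
`exp (-b (1/t - 1)) ∫ exp (-f)`, whereas the sublevel set `{f ≤ a}` has positive finite measure `m`
and contributes at least `m exp (-a/t)` to the normalisation. The Gibbs mass of `{b ≤ f}` is hence
`O(exp (-(b - a)/t))`.
-/

namespace Gibbs

variable {α : Type*} [MeasurableSpace α]

/-- The mass `π_t s` of `s` under the Gibbs measure with potential `f` and temperature `t`. -/
noncomputable def gibbsMass (μ : Measure α) (f : α → ℝ) (t : ℝ) (s : Set α) : ℝ :=
  (∫ x in s, Real.exp (-f x / t) ∂μ) / ∫ x, Real.exp (-f x / t) ∂μ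

theorem exp_neg_div_le_of_le {t b y : ℝ} (ht₀ : 0 < t) (ht₁ : t ≤ 1) (hby : b ≤ y) :
    Real.exp (-y / t) ≤ Real.exp (-b * (1 / t - 1)) * Real.exp (-y) := by
  have hcoef : 0 ≤ 1 / t - 1 := by rw [sub_nonneg, le_div_iff₀ ht₀]; linarith
  rw [← Real.exp_add, Real.exp_le_exp]
  have hsplit : -y / t = -y * (1 / t - 1) + -y := by field_simp; ring
  rw [hsplit]
  nlinarith

theorem setIntegral_superlevel_exp_neg_div_le {μ : Measure α} {f : α → ℝ} (hf : Measurable f)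
    (hint : Integrable (fun x => Real.exp (-f x)) μ) {t : ℝ} (ht₀ : 0 < t) (ht₁ : t ≤ 1) (b : ℝ) :
    ∫ x in {x | b ≤ f x}, Real.exp (-f x / t) ∂μ ≤
      Real.exp (-b * (1 / t - 1)) * ∫ x, Real.exp (-f x) ∂μ := by
  have hA : MeasurableSet {x | b ≤ f x} := measurableSet_le measurable_const hf
  calc ∫ x in {x | b ≤ f x}, Real.exp (-f x / t) ∂μ
      ≤ ∫ x in {x | b ≤ f x}, Real.exp (-b * (1 / t - 1)) * Real.exp (-f x) ∂μ :=
        integral_mono_of_nonneg (ae_of_all _ fun _ => (Real.exp_pos _).le)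
          (hint.const_mul _).integrableOn
          ((ae_restrict_iff' hA).2 (ae_of_all _ fun _ hx => exp_neg_div_le_of_le ht₀ ht₁ hx))
    _ ≤ ∫ x, Real.exp (-b * (1 / t - 1)) * Real.exp (-f x) ∂μ :=
        setIntegral_le_integral (hint.const_mul _) (ae_of_all _ fun _ => by positivity)
    _ = Real.exp (-b * (1 / t - 1)) * ∫ x, Real.exp (-f x) ∂μ := integral_const_mul _ _

theorem measureReal_sublevel_mul_exp_le_integral {μ : Measure α} {f : α → ℝ} (hf : Measurable f)
    {t : ℝ} (ht₀ : 0 < t) (hint : Integrable (fun x => Real.exp (-f x / t)) μ) {a : ℝ}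
    (ha : μ {x | f x ≤ a} ≠ ⊤) :
    Real.exp (-a / t) * μ.real {x | f x ≤ a} ≤ ∫ x, Real.exp (-f x / t) ∂μ :=
  (setIntegral_ge_of_const_le_real (measurableSet_le hf measurable_const) ha
      (fun _ hx => Real.exp_le_exp.2 (div_le_div_of_nonneg_right (neg_le_neg hx) ht₀.le))
      hint.integrableOn).trans
    (setIntegral_le_integral hint (ae_of_all _ fun _ => (Real.exp_pos _).le))

theorem measure_sublevel_lt_top {μ : Measure α} {f : α → ℝ}
    (hint : Integrable (fun x => Real.exp (-f x)) μ) (a : ℝ) : μ {x | f x ≤ a} < ⊤ := by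
  convert hint.measure_ge_lt_top (Real.exp_pos (-a)) using 3
  simp

/-- If exp (-f/t) is not integrable, the Bochner integral vanishes and so does the left side. -/
theorem gibbsMass_superlevel_le {μ : Measure α} {f : α → ℝ} (hf : Measurable f)
    (hint : Integrable (fun x => Real.exp (-f x)) μ) {a : ℝ} (ha : 0 < μ {x | f x ≤ a}) (b : ℝ)
    {t : ℝ} (ht₀ : 0 < t) (ht₁ : t ≤ 1) :
    gibbsMass μ f t {x | b ≤ f x} ≤
      (∫ x, Real.exp (-f x) ∂μ) / μ.real {x | f x ≤ a} * Real.exp b * Real.exp (-(b - a) / t) := by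
  have hfin := (measure_sublevel_lt_top hint a).ne
  have hm : 0 < μ.real {x | f x ≤ a} := ENNReal.toReal_pos ha.ne' hfin
  unfold gibbsMass
  by_cases hint_t : Integrable (fun x => Real.exp (-f x / t)) μ
  · calc (∫ x in {x | b ≤ f x}, Real.exp (-f x / t) ∂μ) / ∫ x, Real.exp (-f x / t) ∂μ
        ≤ Real.exp (-b * (1 / t - 1)) * (∫ x, Real.exp (-f x) ∂μ) /
            (Real.exp (-a / t) * μ.real {x | f x ≤ a}) :=
          div_le_div₀ (by positivity) (setIntegral_superlevel_exp_neg_div_le hf hint ht₀ ht₁ b)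
            (by positivity) (measureReal_sublevel_mul_exp_le_integral hf ht₀ hint_t hfin)
      _ = _ := by
          have hexp : Real.exp (-b * (1 / t - 1)) =
              Real.exp b * Real.exp (-(b - a) / t) * Real.exp (-a / t) := by
            rw [← Real.exp_add, ← Real.exp_add]; congr 1; field_simp; ring
          rw [hexp]; field_simp
  · rw [integral_undef hint_t, div_zero]
    positivity

theorem tendsto_gibbsMass_superlevel {μ : Measure α} {f : α → ℝ} (hf : Measurable f)
    (hint : Integrable (fun x => Real.exp (-f x)) μ) {a b : ℝ} (hab : a < b)
    (ha : 0 < μ {x | f x ≤ a}) :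
    Tendsto (fun t => gibbsMass μ f t {x | b ≤ f x}) (𝓝[>] 0) (𝓝 0) := by
  have hdecay : Tendsto (fun t : ℝ => Real.exp (-(b - a) / t)) (𝓝[>] 0) (𝓝 0) := by
    refine Real.tendsto_exp_atBot.comp ?_
    refine (tendsto_neg_atTop_atBot.comp
      (tendsto_inv_nhdsGT_zero.const_mul_atTop (sub_pos.2 hab))).congr fun t => ?_
    simp only [Function.comp_apply, div_eq_mul_inv, neg_mul]
  have hbound := hdecay.const_mul
    ((∫ x, Real.exp (-f x) ∂μ) / μ.real {x | f x ≤ a} * Real.exp b)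
  rw [mul_zero] at hbound
  refine squeeze_zero' ?_ ?_ hbound
  · filter_upwards with t
    exact div_nonneg (setIntegral_nonneg (measurableSet_le measurable_const hf)
      fun _ _ => (Real.exp_pos _).le) (integral_nonneg fun _ => (Real.exp_pos _).le)
  · filter_upwards [Ioc_mem_nhdsGT one_pos] with t ht
    exact gibbsMass_superlevel_le hf hint ha b ht.1 ht.2

theorem measure_sublevel_pos_of_sInf_lt {μ : Measure α} {f : α → ℝ}
    (hne : {y : ℝ | 0 < μ {x | f x ≤ y}}.Nonempty) {a : ℝ}
    (ha : sInf {y : ℝ | 0 < μ {x | f x ≤ y}} < a) : 0 < μ {x | f x ≤ a} := by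
  obtain ⟨y, hy, hya⟩ := exists_lt_of_csInf_lt hne ha
  exact hy.trans_le (measure_mono fun x hx => le_trans hx hya.le)

end Gibbs

open Gibbs in
theorem stmt0_general (d : ℕ) (f : EuclideanSpace ℝ (Fin d) → ℝ)
    (hf : Measurable f)
    (hne : {y : ℝ | 0 < volume {x | f x ≤ y}}.Nonempty)
    (hint : Integrable (fun x => Real.exp (-f x)))
    (ε : ℝ) (hε : 0 < ε) :
    Tendsto (fun t : ℝ =>
        (∫ x in {x : EuclideanSpace ℝ (Fin d) |
            sInf {y : ℝ | 0 < volume {x' : EuclideanSpace ℝ (Fin d) | f x' ≤ y}} + ε ≤ f x},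
          Real.exp (-f x / t)) / ∫ x, Real.exp (-f x / t))
      (𝓝[>] 0) (𝓝 0) := by
  set fStar := sInf {y : ℝ | 0 < volume {x : EuclideanSpace ℝ (Fin d) | f x ≤ y}}
  have hsub : 0 < volume {x | f x ≤ fStar + ε / 2} :=
    measure_sublevel_pos_of_sInf_lt hne (by linarith)
  exact tendsto_gibbsMass_superlevel hf hint (by linarith) hsub

/-- Convergence of Gibbs measures: π_t({f ≥ f* + ε}) → 0 as t → 0⁺, where
f* = essinf f = sInf {y | λ{f ≤ y} > 0}. -/
theorem stmt0 (d : ℕ) (f : EuclideanSpace ℝ (Fin d) → ℝ)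
    (hf : Measurable f)
    (hne : {y : ℝ | 0 < volume {x | f x ≤ y}}.Nonempty)
    (hbd : BddBelow {y : ℝ | 0 < volume {x | f x ≤ y}})
    (hint : Integrable (fun x => Real.exp (-f x)))
    (ε : ℝ) (hε : 0 < ε) :
    Tendsto (fun t : ℝ =>
        (∫ x in {x : EuclideanSpace ℝ (Fin d) |
            sInf {y : ℝ | 0 < volume {x' : EuclideanSpace ℝ (Fin d) | f x' ≤ y}} + ε ≤ f x},
          Real.exp (-f x / t)) / ∫ x, Real.exp (-f x / t))
      (𝓝[>] 0) (𝓝 0) :=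
  stmt0_general d f hf hne hint ε hε
end

section
/- Let f : ℝ^d → ℝ be C⁴ with a local minimum at x*. Let F = {v ∈ ℝ^d : ∇²f(x*)·v = 0} and E its orthogonal complement. Then for all h ∈ ℝ^d, (1/t)[f(x* + t^{1/2} p_E(h) + t^{1/4} p_F(h)) − f(x*)] converges as t → 0⁺ to (1/2)∇²f(x*)·p_E(h)^{⊗2} + (1/2)∇³f(x*)·p_E(h) ⊗ p_F(h)^{⊗2} + (1/4!)∇⁴f(x*)·p_F(h)^{⊗4}. -/
/-!
Put `r = t^{1/4}`, `a = p_E(h)` and `b = p_F(h)`, so that the point is `x* + r • (r • a + b)` and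
`t = r⁴`. By Taylor's theorem with Peano remainder, `f` differs there from its quartic Taylor
polynomial by `o(r⁴)`. Since `∇f(x*) = 0`, `∇²f(x*)·b = 0` and `∇³f(x*)·b^{⊗3} = 0` (otherwise
`f(x* + s b) - f(x*) ~ ∇³f(x*)·b^{⊗3} s³ / 6` would change sign at `s = 0`), every term of order
below `r⁴` vanishes, and the coefficient of `r⁴` is the claimed limit, the three mixed cubic terms
being equal by the symmetry of `∇³f(x*)`.

Taylor's theorem is proved by induction on the order: along `s ↦ s • v`, the derivative of the
remainder of `f` is the remainder of `fderiv ℝ f` one order lower, so the mean value inequality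
lifts the `o(‖v‖ⁿ)` bound.
-/

open Topology Filter Asymptotics Finset
open scoped Nat

universe u

theorem ContinuousMultilinearMap.map_smul_const {R ι M N : Type*} [CommSemiring R] [Fintype ι]
    [AddCommMonoid M] [Module R M] [TopologicalSpace M] [AddCommMonoid N] [Module R N]
    [TopologicalSpace N] (T : ContinuousMultilinearMap R (fun _ : ι => M) N) (c : R) (v : M) :
    T (fun _ => c • v) = c ^ Fintype.card ι • T (fun _ => v) := by
  simpa using T.map_smul_univ (fun _ => c) (fun _ => v)

section Taylor

variable {E : Type u} [NormedAddCommGroup E] [NormedSpace ℝ E]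

noncomputable def taylorRemainder {F : Type*} [NormedAddCommGroup F] [NormedSpace ℝ F]
    (f : E → F) (x : E) (n : ℕ) (v : E) : F :=
  f (x + v) - ∑ k ∈ range (n + 1), (k ! : ℝ)⁻¹ • iteratedFDeriv ℝ k f x (fun _ => v)

theorem taylorRemainder_zero_right {F : Type*} [NormedAddCommGroup F] [NormedSpace ℝ F]
    (f : E → F) (x : E) (n : ℕ) : taylorRemainder f x n 0 = 0 := by
  simp [taylorRemainder, sum_range_succ', ← Pi.zero_def]

theorem hasDerivAt_taylorRemainder_succ_smul {F : Type*} [NormedAddCommGroup F] [NormedSpace ℝ F]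
    {f : E → F} {n : ℕ} (hf : ContDiff ℝ (n + 1) f) (x v : E) (s : ℝ) :
    HasDerivAt (fun s : ℝ => taylorRemainder f x (n + 1) (s • v))
      (taylorRemainder (fderiv ℝ f) x n (s • v) v) s := by
  have hline : HasDerivAt (fun s : ℝ => f (x + s • v)) (fderiv ℝ f (x + s • v) v) s :=
    ((hf.differentiable (by simp)) _).hasFDerivAt.comp_hasDerivAt s
      (((hasDerivAt_id s).smul_const v).const_add x |>.congr_deriv (one_smul ℝ v))
  have hpoly : HasDerivAt
      (fun s : ℝ => ∑ k ∈ range (n + 2), (k ! : ℝ)⁻¹ • s ^ k • iteratedFDeriv ℝ k f x (fun _ => v))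
      (∑ k ∈ range (n + 2), (k ! : ℝ)⁻¹ • ((k * s ^ (k - 1)) • iteratedFDeriv ℝ k f x (fun _ => v)))
      s :=
    HasDerivAt.fun_sum fun k _ => ((hasDerivAt_pow k s).smul_const _).const_smul _
  convert hline.sub hpoly using 1
  · ext s
    simp [taylorRemainder, ContinuousMultilinearMap.map_smul_const]
  · rw [taylorRemainder, sub_apply, _root_.sum_apply, sum_range_succ' _ (n + 1)]
    simp only [CharP.cast_eq_zero, zero_mul, zero_smul, smul_zero, add_zero]
    congr 1
    refine sum_congr rfl fun k _ => ?_
    rw [iteratedFDeriv_succ_apply_right, ContinuousMultilinearMap.map_smul_const]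
    simp only [Fintype.card_fin, smul_apply, smul_smul, Nat.factorial_succ,
      Nat.cast_mul, add_tsub_cancel_right]
    congr 1
    push_cast
    field_simp

-- `F` lives in the universe of `E` because the induction passes to `fderiv ℝ f : E → E →L[ℝ] F`.
theorem ContDiff.taylorRemainder_isLittleO {F : Type u} [NormedAddCommGroup F] [NormedSpace ℝ F]
    {f : E → F} {n : ℕ} (hf : ContDiff ℝ n f) (x : E) :
    taylorRemainder f x n =o[𝓝 0] fun v => ‖v‖ ^ n := by
  induction n generalizing F with
  | zero =>
    have hcont : Tendsto (fun v => f (x + v)) (𝓝 0) (𝓝 (f x)) := by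
      simpa [Function.comp_def] using (hf.continuous.comp (continuous_const_add x)).tendsto 0
    have hR : taylorRemainder f x 0 = fun v => f (x + v) - f x := by
      ext v
      simp [taylorRemainder]
    simpa [hR, isLittleO_one_iff] using hcont.sub_const (f x)
  | succ n ih =>
    have hg := ih (hf.fderiv_right (by simp))
    refine isLittleO_iff.2 fun ε hε => ?_
    obtain ⟨δ, hδ, hsmall⟩ := Metric.eventually_nhds_iff_ball.1 (isLittleO_iff.1 hg hε)
    filter_upwards [Metric.ball_mem_nhds 0 hδ] with v hv
    have hv' : ‖v‖ < δ := by simpa using hv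
    have hbound : ∀ s ∈ Set.Ico (0 : ℝ) 1,
        ‖taylorRemainder (fderiv ℝ f) x n (s • v) v‖ ≤ ε * ‖v‖ ^ (n + 1) := by
      intro s ⟨hs0, hs1⟩
      have hsv : ‖s • v‖ ≤ ‖v‖ := by
        rw [norm_smul, Real.norm_of_nonneg hs0]
        exact mul_le_of_le_one_left (norm_nonneg v) hs1.le
      calc ‖taylorRemainder (fderiv ℝ f) x n (s • v) v‖
          ≤ ‖taylorRemainder (fderiv ℝ f) x n (s • v)‖ * ‖v‖ := ContinuousLinearMap.le_opNorm _ _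
        _ ≤ ε * ‖s • v‖ ^ n * ‖v‖ := by
          gcongr
          simpa using hsmall (y := s • v) (by simpa using hsv.trans_lt hv')
        _ ≤ ε * ‖v‖ ^ (n + 1) := by
          rw [pow_succ, ← mul_assoc]
          gcongr
    have := norm_image_sub_le_of_norm_deriv_le_segment_01'
      (fun s _ => (hasDerivAt_taylorRemainder_succ_smul hf x v s).hasDerivWithinAt) hbound
    simpa [taylorRemainder_zero_right] using this

theorem ContDiff.taylorRemainder_smul_isLittleO {F : Type u} [NormedAddCommGroup F]
    [NormedSpace ℝ F] {f : E → F} {n : ℕ} (hf : ContDiff ℝ n f) (x : E) {w : ℝ → E}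
    (hw : ContinuousAt w 0) :
    (fun s => taylorRemainder f x n (s • w s)) =o[𝓝 0] fun s => s ^ n := by
  have hγ : (fun s : ℝ => s • w s) =O[𝓝 0] fun s => s := by
    simpa using (isBigO_refl (fun s : ℝ => s) _).smul (hw.tendsto.isBigO_one ℝ)
  exact ((hf.taylorRemainder_isLittleO x).comp_tendsto (hγ.trans_tendsto tendsto_id)).trans_isBigO
    (hγ.norm_left.pow n)

end Taylor

theorem eq_zero_of_isLittleO_sub_mul_pow_of_nonneg {ψ : ℝ → ℝ} {c : ℝ} {n : ℕ} (hn : Odd n)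
    (h : (fun s => ψ s - c * s ^ n) =o[𝓝 0] fun s => s ^ n) (hψ : ∀ᶠ s in 𝓝 0, 0 ≤ ψ s) :
    c = 0 := by
  have hlim : Tendsto (fun s => ψ s / s ^ n) (𝓝[≠] 0) (𝓝 c) := by
    have := (h.tendsto_div_nhds_zero.mono_left (nhdsWithin_le_nhds (s := {0}ᶜ))).add_const c
    rw [zero_add] at this
    refine this.congr' ?_
    filter_upwards [self_mem_nhdsWithin] with s (hs : s ≠ 0)
    field_simp
    ring
  have hpos : 0 ≤ c := by
    refine ge_of_tendsto (x := 𝓝[>] 0)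
      (hlim.mono_left (nhdsWithin_mono _ fun s (hs : 0 < s) => hs.ne')) ?_
    filter_upwards [self_mem_nhdsWithin, nhdsWithin_le_nhds hψ] with s (hs : 0 < s) hψs
    positivity
  have hneg : c ≤ 0 := by
    refine le_of_tendsto (x := 𝓝[<] 0)
      (hlim.mono_left (nhdsWithin_mono _ fun s (hs : s < 0) => hs.ne)) ?_
    filter_upwards [self_mem_nhdsWithin, nhdsWithin_le_nhds hψ] with s (hs : s < 0) hψs
    exact div_nonpos_of_nonneg_of_nonpos hψs (hn.pow_neg hs).le
  exact le_antisymm hneg hpos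

section IteratedFDeriv

variable {𝕜 E F : Type*} [NontriviallyNormedField 𝕜] [NormedAddCommGroup E] [NormedSpace 𝕜 E]
  [NormedAddCommGroup F] [NormedSpace 𝕜 F]

theorem iteratedFDeriv_three_apply (f : E → F) (z : E) (m : Fin 3 → E) :
    iteratedFDeriv 𝕜 3 f z m = fderiv 𝕜 (fderiv 𝕜 (fderiv 𝕜 f)) z (m 0) (m 1) (m 2) := by
  rw [iteratedFDeriv_succ_apply_right, iteratedFDeriv_two_apply]
  rfl

end IteratedFDeriv

section Symmetry

variable {E F : Type*} [NormedAddCommGroup E] [NormedSpace ℝ E] [NormedAddCommGroup F]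
  [NormedSpace ℝ F] {f : E → F}

theorem ContDiff.iteratedFDeriv_three_swap_left (hf : ContDiff ℝ 3 f) (x u v w : E) :
    iteratedFDeriv ℝ 3 f x ![u, v, w] = iteratedFDeriv ℝ 3 f x ![v, u, w] := by
  simp only [iteratedFDeriv_three_apply, Matrix.cons_val]
  have hsymm := (hf.fderiv_right (m := 2) (by norm_num)).contDiffAt.isSymmSndFDerivAt
    (x := x) (by simp)
  rw [hsymm.eq u v]

theorem ContDiff.iteratedFDeriv_three_swap_right (hf : ContDiff ℝ 3 f) (x u v w : E) :
    iteratedFDeriv ℝ 3 f x ![u, v, w] = iteratedFDeriv ℝ 3 f x ![u, w, v] := by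
  have hdiff : DifferentiableAt ℝ (iteratedFDeriv ℝ 2 f) x :=
    hf.differentiable_iteratedFDeriv (by norm_num) x
  have hsymm : (fun y => iteratedFDeriv ℝ 2 f y ![v, w]) = fun y => iteratedFDeriv ℝ 2 f y ![w, v] :=
    funext fun y => IsSymmSndFDerivAt.iteratedFDeriv_cons
      (hf := hf.contDiffAt.isSymmSndFDerivAt (by norm_num))
  rw [iteratedFDeriv_succ_apply_left, iteratedFDeriv_succ_apply_left]
  change fderiv ℝ (iteratedFDeriv ℝ 2 f) x u ![v, w] = fderiv ℝ (iteratedFDeriv ℝ 2 f) x u ![w, v]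
  rw [← fderiv_continuousMultilinear_apply_const_apply hdiff,
    ← fderiv_continuousMultilinear_apply_const_apply hdiff, hsymm]

end Symmetry

theorem IsLocalMin.iteratedFDeriv_three_eq_zero {E : Type} [NormedAddCommGroup E]
    [NormedSpace ℝ E] {f : E → ℝ} {x b : E} (hmin : IsLocalMin f x) (hf : ContDiff ℝ 3 f)
    (hb : ∀ w, iteratedFDeriv ℝ 2 f x ![b, w] = 0) : iteratedFDeriv ℝ 3 f x (fun _ => b) = 0 := by
  have hbb : iteratedFDeriv ℝ 2 f x (fun _ => b) = 0 := by
    rw [← hb b]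
    congr 1
    ext i
    fin_cases i <;> rfl
  have hexpand : ∀ s : ℝ, taylorRemainder f x 3 (s • b) =
      (f (x + s • b) - f x) - 6⁻¹ * iteratedFDeriv ℝ 3 f x (fun _ => b) * s ^ 3 := by
    intro s
    simp only [taylorRemainder, sum_range_succ, range_one, sum_singleton,
      ContinuousMultilinearMap.map_smul_const, iteratedFDeriv_zero_apply, iteratedFDeriv_one_apply,
      hmin.fderiv_eq_zero, zero_apply, hbb, Fintype.card_fin, smul_eq_mul, Nat.factorial]
    ring
  have hmin' : ∀ᶠ s in 𝓝 (0 : ℝ), 0 ≤ f (x + s • b) - f x := by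
    have hcont : Tendsto (fun s : ℝ => x + s • b) (𝓝 0) (𝓝 x) :=
      (continuous_const.add (continuous_id.smul continuous_const)).tendsto' 0 x (by simp)
    filter_upwards [hcont.eventually hmin] with s hs
    exact sub_nonneg.2 hs
  have := eq_zero_of_isLittleO_sub_mul_pow_of_nonneg (by decide : Odd 3)
    ((hf.taylorRemainder_smul_isLittleO x continuousAt_const).congr_left hexpand) hmin'
  simpa using this

theorem quadratic_add_cubic_smul_smul_add {E : Type*} [NormedAddCommGroup E] [NormedSpace ℝ E]
    (B : E →L[ℝ] E →L[ℝ] ℝ) (C : E →L[ℝ] E →L[ℝ] E →L[ℝ] ℝ) {a b : E} (hBb : B b = 0)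
    (hBab : B a b = 0) (hCbbb : C b b b = 0) (r : ℝ) :
    2⁻¹ * B (r • (r • a + b)) (r • (r • a + b))
        + 6⁻¹ * C (r • (r • a + b)) (r • (r • a + b)) (r • (r • a + b)) =
      r ^ 4 * (2⁻¹ * B a a
        + 6⁻¹ * (C a (r • a + b) (r • a + b) + C b a (r • a + b) + C b b a)) := by
  simp only [map_add, map_smul, add_apply, smul_apply, smul_eq_mul, hBb, hBab, hCbbb, zero_apply]
  ring

theorem IsLocalMin.tendsto_sub_div_pow_four_nested {E : Type} [NormedAddCommGroup E]
    [NormedSpace ℝ E] {f : E → ℝ} {x b : E} (hmin : IsLocalMin f x) (hf : ContDiff ℝ 4 f)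
    (hb : ∀ w, iteratedFDeriv ℝ 2 f x ![b, w] = 0) (a : E) :
    Tendsto (fun r : ℝ => (f (x + r ^ 2 • a + r • b) - f x) / r ^ 4) (𝓝[≠] 0)
      (𝓝 ((1 / 2) * iteratedFDeriv ℝ 2 f x ![a, a] + (1 / 2) * iteratedFDeriv ℝ 3 f x ![a, b, b]
        + (1 / (Nat.factorial 4) : ℝ) * iteratedFDeriv ℝ 4 f x (fun _ => b))) := by
  have hf3 : ContDiff ℝ 3 f := hf.of_le (by norm_num)
  set B := fderiv ℝ (fderiv ℝ f) x with hB
  set C := fderiv ℝ (fderiv ℝ (fderiv ℝ f)) x with hC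
  have hBb : B b = 0 := by
    ext w
    simpa [iteratedFDeriv_two_apply] using hb w
  have hBab : B a b = 0 := by
    rw [(hf.contDiffAt.isSymmSndFDerivAt (by norm_num)).eq a b, hBb, zero_apply]
  have hCbbb : C b b b = 0 := by
    simpa [iteratedFDeriv_three_apply] using hmin.iteratedFDeriv_three_eq_zero hf3 hb
  have hCbab : C b a b = C a b b := by
    simpa [iteratedFDeriv_three_apply] using hf3.iteratedFDeriv_three_swap_left x b a b
  have hCbba : C b b a = C b a b := by
    simpa [iteratedFDeriv_three_apply] using hf3.iteratedFDeriv_three_swap_right x b b a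
  let g : ℝ → ℝ := fun r => 2⁻¹ * B a a
    + 6⁻¹ * (C a (r • a + b) (r • a + b) + C b a (r • a + b) + C b b a)
    + 24⁻¹ * iteratedFDeriv ℝ 4 f x (fun _ => r • a + b)
  have hg : Tendsto g (𝓝[≠] 0) (𝓝 (g 0)) :=
    (Continuous.tendsto (by fun_prop) 0).mono_left nhdsWithin_le_nhds
  have hR := (hf.taylorRemainder_smul_isLittleO x (w := fun r => r • a + b) (by fun_prop))
    |>.tendsto_div_nhds_zero.mono_left (nhdsWithin_le_nhds (s := {0}ᶜ))
  have hexpand : ∀ r : ℝ, taylorRemainder f x 4 (r • (r • a + b)) =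
      f (x + r ^ 2 • a + r • b) - f x - r ^ 4 * g r := by
    intro r
    have hpt : x + r • (r • a + b) = x + r ^ 2 • a + r • b := by
      rw [smul_add, smul_smul, ← pow_two, add_assoc]
    simp only [taylorRemainder, hpt, sum_range_succ, range_one, sum_singleton,
      iteratedFDeriv_zero_apply, iteratedFDeriv_one_apply, hmin.fderiv_eq_zero, zero_apply,
      iteratedFDeriv_two_apply, iteratedFDeriv_three_apply]
    rw [ContinuousMultilinearMap.map_smul_const]
    simp only [g, ← hB, ← hC, Nat.factorial, Fintype.card_fin, smul_eq_mul]
    linear_combination -(quadratic_add_cubic_smul_smul_add B C hBb hBab hCbbb r)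
  have hg0 : g 0 = (1 / 2) * iteratedFDeriv ℝ 2 f x ![a, a]
      + (1 / 2) * iteratedFDeriv ℝ 3 f x ![a, b, b]
      + (1 / (Nat.factorial 4) : ℝ) * iteratedFDeriv ℝ 4 f x (fun _ => b) := by
    simp only [g, zero_smul, zero_add, hCbba, hCbab, iteratedFDeriv_two_apply,
      iteratedFDeriv_three_apply, ← hB, ← hC, Matrix.cons_val_zero, Matrix.cons_val_one,
      Matrix.cons_val, Nat.factorial]
    ring
  have hlim := hg.add hR
  rw [add_zero, hg0] at hlim
  refine hlim.congr' ?_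
  filter_upwards [self_mem_nhdsWithin] with r (hr : r ≠ 0)
  rw [hexpand r]
  field_simp
  ring

/-- Fourth-order nested expansion: with F = ker ∇²f(x*) and E = Fᗮ,
(1/t)[f(x* + t^{1/2} p_E(h) + t^{1/4} p_F(h)) − f(x*)] →
(1/2)∇²f·p_E(h)^{⊗2} + (1/2)∇³f·p_E(h)⊗p_F(h)^{⊗2} + (1/4!)∇⁴f·p_F(h)^{⊗4}. -/
theorem stmt8 (d : ℕ) (f : EuclideanSpace ℝ (Fin d) → ℝ) (x : EuclideanSpace ℝ (Fin d))
    (hf : ContDiff ℝ 4 f) (hmin : IsLocalMin f x)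
    (F : Submodule ℝ (EuclideanSpace ℝ (Fin d)))
    (hF : ∀ v, v ∈ F ↔ ∀ w : EuclideanSpace ℝ (Fin d), iteratedFDeriv ℝ 2 f x ![v, w] = 0)
    (h : EuclideanSpace ℝ (Fin d)) :
    Tendsto (fun t : ℝ =>
        (f (x + t ^ ((1:ℝ) / 2) • (Fᗮ.orthogonalProjectionOnto h : EuclideanSpace ℝ (Fin d))
            + t ^ ((1:ℝ) / 4) • (F.orthogonalProjectionOnto h : EuclideanSpace ℝ (Fin d))) - f x) / t)
      (𝓝[>] 0)
      (𝓝 ((1 / 2) * iteratedFDeriv ℝ 2 f x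
            ![(Fᗮ.orthogonalProjectionOnto h : EuclideanSpace ℝ (Fin d)),
              (Fᗮ.orthogonalProjectionOnto h : EuclideanSpace ℝ (Fin d))]
        + (1 / 2) * iteratedFDeriv ℝ 3 f x
            ![(Fᗮ.orthogonalProjectionOnto h : EuclideanSpace ℝ (Fin d)),
              (F.orthogonalProjectionOnto h : EuclideanSpace ℝ (Fin d)),
              (F.orthogonalProjectionOnto h : EuclideanSpace ℝ (Fin d))]
        + (1 / (Nat.factorial 4) : ℝ) * iteratedFDeriv ℝ 4 f x
            (fun _ => (F.orthogonalProjectionOnto h : EuclideanSpace ℝ (Fin d))))) := by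
  have hb := (hF _).1 (F.orthogonalProjectionOnto h).2
  have hroot : Tendsto (fun t : ℝ => t ^ ((1 : ℝ) / 4)) (𝓝[>] 0) (𝓝[≠] 0) := by
    refine tendsto_nhdsWithin_of_tendsto_nhds_of_eventually_within _ ?_ ?_
    · have := (Real.continuousAt_rpow_const 0 ((1 : ℝ) / 4) (by norm_num)).tendsto
      rw [Real.zero_rpow (by norm_num)] at this
      exact this.mono_left nhdsWithin_le_nhds
    · filter_upwards [self_mem_nhdsWithin] with t (ht : 0 < t)
      exact (Real.rpow_pos_of_pos ht _).ne'
  refine ((hmin.tendsto_sub_div_pow_four_nested hf hb _).comp hroot).congr' ?_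
  filter_upwards [self_mem_nhdsWithin] with t (ht : 0 < t)
  have hpow : ∀ n : ℕ, (t ^ ((1 : ℝ) / 4)) ^ n = t ^ ((n : ℝ) / 4) := fun n => by
    rw [← Real.rpow_natCast, ← Real.rpow_mul ht.le]
    ring_nf
  simp only [Function.comp_apply, hpow]
  norm_num
end

section
/- Let f : ℝ^d → ℝ be C⁶ with a local minimum at x*. Let F₁ = ker ∇²f(x*), E₁ its orthogonal complement, F₂ = {h ∈ F₁ : ∀h' ∈ F₁, ∇⁴f(x*)·h ⊗ h'^{⊗3} = 0}, and E₂ the orthogonal complement of F₂ in F₁. Then ∇³f(x*) · p_{E₁}(h) ⊗ p_{F₂}(h)^{⊗2} = 0 for all h ∈ ℝ^d. -/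
/-!
Write `a` and `b` for the two projections of `h`, so that `∇²f(x*)·b = 0` and
`∇⁴f(x*)·b^{⊗4} = 0`. Along the parabola `γ(s) = x* + s b + s² a` the function `g = f ∘ γ` has a
local minimum at `0`. Since `γ' = b + 2 s a`, the derivative of `F ∘ γ` is
`(∂_b F) ∘ γ + 2 s (∂_a F) ∘ γ`; iterating this gives `g'(0) = g''(0) = 0`,
`g'''(0) = ∇³f·b^{⊗3}` and `g⁗(0) = ∇⁴f·b^{⊗4} + 12 ∇³f·a⊗b^{⊗2} + 12 ∇²f·a^{⊗2}`.
At a minimum the first nonvanishing derivative has even order and is positive, so `g'''(0) = 0`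
and `0 ≤ ∇²f·a^{⊗2} + ∇³f·a⊗b^{⊗2}`. Replacing `a` by `ε a` gives `0 ≤ ε² P + ε Q` for every
real `ε`, which forces `Q = ∇³f·a⊗b^{⊗2} = 0`.
-/

open Set Topology

section RealLine

variable {g : ℝ → ℝ} {n : ℕ} {x₀ : ℝ}

theorem taylorWithinEval_univ_eq_of_iteratedDeriv_eq_zero (hn : n ≠ 0)
    (hvanish : ∀ k, 0 < k → k < n → iteratedDeriv k g x₀ = 0) (x : ℝ) :
    taylorWithinEval g n univ x₀ x =
      g x₀ + iteratedDeriv n g x₀ * (x - x₀) ^ n / n.factorial := by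
  rw [taylor_within_apply, Finset.sum_range_succ, Finset.sum_eq_single 0]
  · simp [iteratedDerivWithin_univ]
    ring
  · intro k hk hk0
    rw [iteratedDerivWithin_univ, hvanish k (Nat.pos_of_ne_zero hk0) (Finset.mem_range.1 hk),
      smul_zero]
  · simp [Nat.pos_of_ne_zero hn]

theorem IsLocalMin.iteratedDeriv_nonneg (hg : ContDiff ℝ n g) (hmin : IsLocalMin g x₀)
    (hn : n ≠ 0) (hvanish : ∀ k, 0 < k → k < n → iteratedDeriv k g x₀ = 0) :
    0 ≤ iteratedDeriv n g x₀ := by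
  by_contra! hneg
  set c := iteratedDeriv n g x₀ / n.factorial
  have hc : c < 0 := div_neg_of_neg_of_pos hneg (by positivity)
  have hrem := (taylor_isLittleO_univ (x₀ := x₀) hg).def (c := -c / 2) (by linarith)
  simp_rw [taylorWithinEval_univ_eq_of_iteratedDeriv_eq_zero hn hvanish] at hrem
  obtain ⟨x, hx_rem, hx_min, hx_pos⟩ := ((hrem.filter_mono nhdsWithin_le_nhds).and
    ((hmin.filter_mono nhdsWithin_le_nhds).and self_mem_nhdsWithin)).exists (f := 𝓝[>] x₀)
  have ht : 0 < (x - x₀) ^ n := pow_pos (sub_pos.2 hx_pos) n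
  rw [Real.norm_eq_abs, Real.norm_eq_abs, abs_of_pos ht, abs_le] at hx_rem
  have : iteratedDeriv n g x₀ * (x - x₀) ^ n / n.factorial = c * (x - x₀) ^ n := by ring
  nlinarith [hx_rem.2]

theorem IsLocalMin.iteratedDeriv_eq_zero_of_odd (hg : ContDiff ℝ n g) (hmin : IsLocalMin g x₀)
    (hn : Odd n) (hvanish : ∀ k, 0 < k → k < n → iteratedDeriv k g x₀ = 0) :
    iteratedDeriv n g x₀ = 0 := by
  have hmin' : IsLocalMin (fun t => g (-t)) (-x₀) := by
    refine IsLocalMin.comp_continuous (g := Neg.neg) ?_ continuous_neg.continuousAt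
    rwa [neg_neg]
  have key := hmin'.iteratedDeriv_nonneg (g := fun t => g (-t)) (hg.comp contDiff_neg) hn.pos.ne'
    fun k hk hkn => by rw [iteratedDeriv_comp_neg, neg_neg, hvanish k hk hkn, smul_zero]
  rw [iteratedDeriv_comp_neg, neg_neg, hn.neg_one_pow, neg_one_smul, neg_nonneg] at key
  exact le_antisymm key (hmin.iteratedDeriv_nonneg hg hn.pos.ne' hvanish)

end RealLine

theorem eq_zero_of_forall_sq_mul_add_mul_nonneg {p q : ℝ}
    (h : ∀ ε : ℝ, 0 ≤ ε ^ 2 * p + ε * q) : q = 0 := by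
  by_contra hq
  have h1 := h (-q / (|p| + 1))
  have hp : 0 < |p| + 1 := by positivity
  have hq2 : 0 < q ^ 2 := by positivity
  rw [div_pow, neg_sq] at h1
  field_simp at h1
  nlinarith [le_abs_self p]

section Multilinear

variable {E : Type*} [NormedAddCommGroup E] [NormedSpace ℝ E]

theorem ContinuousMultilinearMap.map_vecCons_smul {n : ℕ}
    (Φ : ContinuousMultilinearMap ℝ (fun _ : Fin (n + 1) => E) ℝ) (c : ℝ) (u : E)
    (m : Fin n → E) :
    Φ (Matrix.vecCons (c • u) m) = c * Φ (Matrix.vecCons u m) := by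
  simpa [Matrix.vecCons, Fin.update_cons_zero] using Φ.map_update_smul (Matrix.vecCons u m) 0 c u

theorem ContinuousMultilinearMap.map_smul_pair
    (Φ : ContinuousMultilinearMap ℝ (fun _ : Fin 2 => E) ℝ) (c : ℝ) (u v : E) :
    Φ ![c • u, c • v] = c ^ 2 * Φ ![u, v] := by
  have := Φ.map_smul_univ (fun _ => c) ![u, v]
  simp only [Fin.prod_const, smul_eq_mul] at this
  rw [← this]
  congr 1
  ext i
  fin_cases i <;> rfl

end Multilinear

section Directional

variable {E : Type*} [NormedAddCommGroup E] [NormedSpace ℝ E] {F : E → ℝ} {n : ℕ}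

theorem ContDiff.fderiv_apply_const (hF : ContDiff ℝ (n + 1) F) (w : E) :
    ContDiff ℝ n (fderiv ℝ F · w) :=
  (hF.fderiv_right le_rfl).clm_apply contDiff_const

theorem fderiv_fderiv_apply_comm (hF : ContDiff ℝ 2 F) (y u v : E) :
    fderiv ℝ (fderiv ℝ F · u) y v = fderiv ℝ (fderiv ℝ F · v) y u := by
  have hd : DifferentiableAt ℝ (fderiv ℝ F) y :=
    (hF.fderiv_right (m := 1) (by norm_num)).differentiable one_ne_zero y
  rw [fderiv_clm_apply hd (differentiableAt_const u),
    fderiv_clm_apply hd (differentiableAt_const v)]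
  simpa using (hF.contDiffAt.isSymmSndFDerivAt (by simp)).eq v u

theorem iteratedFDeriv_fderiv_apply_const (hF : ContDiff ℝ (n + 1) F) (w y : E)
    (m : Fin n → E) :
    iteratedFDeriv ℝ n (fderiv ℝ F · w) y m = iteratedFDeriv ℝ (n + 1) F y (Fin.snoc m w) := by
  rw [iteratedFDeriv_succ_apply_right, Fin.init_snoc, Fin.snoc_last]
  have : (fderiv ℝ F · w) = ContinuousLinearMap.apply ℝ ℝ w ∘ fderiv ℝ F := rfl
  rw [this, (ContinuousLinearMap.apply ℝ ℝ w).iteratedFDeriv_comp_left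
    (hF.fderiv_right le_rfl).contDiffAt le_rfl]
  rfl

theorem fderiv_apply_eq_iteratedFDeriv_one (y v : E) :
    fderiv ℝ F y v = iteratedFDeriv ℝ 1 F y ![v] := by
  simp [iteratedFDeriv_one_apply]

theorem fderiv_fderiv_apply_eq_iteratedFDeriv_two (hF : ContDiff ℝ 2 F) (y u v : E) :
    fderiv ℝ (fderiv ℝ F · v) y u = iteratedFDeriv ℝ 2 F y ![u, v] := by
  rw [fderiv_apply_eq_iteratedFDeriv_one, iteratedFDeriv_fderiv_apply_const hF]
  simp

theorem fderiv_fderiv_fderiv_apply_eq_iteratedFDeriv_three (hF : ContDiff ℝ 3 F)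
    (y u v w : E) :
    fderiv ℝ (fderiv ℝ (fderiv ℝ F · w) · v) y u = iteratedFDeriv ℝ 3 F y ![u, v, w] := by
  rw [fderiv_fderiv_apply_eq_iteratedFDeriv_two (hF.fderiv_apply_const w),
    iteratedFDeriv_fderiv_apply_const hF]
  simp

theorem fderiv_fderiv_fderiv_fderiv_apply_eq_iteratedFDeriv_four (hF : ContDiff ℝ 4 F)
    (y u v w z : E) :
    fderiv ℝ (fderiv ℝ (fderiv ℝ (fderiv ℝ F · z) · w) · v) y u =
      iteratedFDeriv ℝ 4 F y ![u, v, w, z] := by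
  rw [fderiv_fderiv_fderiv_apply_eq_iteratedFDeriv_three (hF.fderiv_apply_const z),
    iteratedFDeriv_fderiv_apply_const hF]
  simp

end Directional

def parabola {E : Type*} [AddCommGroup E] [Module ℝ E] (x b a : E) (s : ℝ) : E :=
  x + s • b + s ^ 2 • a

section Parabola

variable {E : Type*} [NormedAddCommGroup E] [NormedSpace ℝ E] {F f : E → ℝ} {n : ℕ}
  {x b a : E}

@[simp]
theorem parabola_zero : parabola x b a 0 = x := by
  simp [parabola]

theorem contDiff_parabola {k : WithTop ℕ∞} : ContDiff ℝ k (parabola x b a) :=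
  (contDiff_const.add (contDiff_id.smul contDiff_const)).add
    ((contDiff_id.pow 2).smul contDiff_const)

theorem hasDerivAt_parabola (s : ℝ) : HasDerivAt (parabola x b a) (b + (2 * s) • a) s := by
  convert (((hasDerivAt_id s).smul_const b).const_add x).add
    ((hasDerivAt_pow 2 s).smul_const a) using 1
  · rfl
  · simp

theorem deriv_comp_parabola (hF : Differentiable ℝ F) :
    deriv (F ∘ parabola x b a) =
      (fderiv ℝ F · b) ∘ parabola x b a +
        (fun s => 2 * s) * ((fderiv ℝ F · a) ∘ parabola x b a) := by
  funext s
  rw [((hF _).hasFDerivAt.comp_hasDerivAt s (hasDerivAt_parabola s)).deriv]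
  simp

theorem iteratedDeriv_succ_comp_parabola_zero (hF : ContDiff ℝ (n + 1) F) :
    iteratedDeriv (n + 1) (F ∘ parabola x b a) 0 =
      iteratedDeriv n ((fderiv ℝ F · b) ∘ parabola x b a) 0 +
        2 * n * iteratedDeriv (n - 1) ((fderiv ℝ F · a) ∘ parabola x b a) 0 := by
  have hFb := (hF.fderiv_apply_const b).comp (contDiff_parabola (x := x) (b := b) (a := a))
  have hFa := (hF.fderiv_apply_const a).comp (contDiff_parabola (x := x) (b := b) (a := a))
  have hlin : ContDiff ℝ n fun s : ℝ => 2 * s := contDiff_const.mul contDiff_id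
  have hprod : ContDiff ℝ n ((fun s : ℝ => 2 * s) * ((fderiv ℝ F · a) ∘ parabola x b a)) :=
    hlin.mul hFa
  rw [iteratedDeriv_succ', deriv_comp_parabola (hF.differentiable (by simp)),
    iteratedDeriv_add hFb.contDiffAt hprod.contDiffAt,
    iteratedDeriv_mul hlin.contDiffAt hFa.contDiffAt]
  congr 1
  have h2s (i : ℕ) : iteratedDeriv i (fun s : ℝ => 2 * s) 0 = if i = 1 then 2 else 0 := by
    rw [iteratedDeriv_const_mul_field, iteratedDeriv_fun_id_zero]
    split_ifs <;> simp
  simp only [h2s, mul_ite, ite_mul, mul_zero, zero_mul, Finset.sum_ite_eq', Finset.mem_range]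
  rcases n with _ | n
  · simp
  · simp [mul_comm]

theorem iteratedDeriv_one_comp_parabola_zero (hf : ContDiff ℝ 1 f) :
    iteratedDeriv 1 (f ∘ parabola x b a) 0 = fderiv ℝ f x b := by
  rw [iteratedDeriv_succ_comp_parabola_zero (n := 0) hf]
  simp

theorem iteratedDeriv_two_comp_parabola_zero (hf : ContDiff ℝ 2 f) :
    iteratedDeriv 2 (f ∘ parabola x b a) 0 =
      iteratedFDeriv ℝ 2 f x ![b, b] + 2 * fderiv ℝ f x a := by
  rw [iteratedDeriv_succ_comp_parabola_zero (n := 1) hf,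
    iteratedDeriv_one_comp_parabola_zero (hf.fderiv_apply_const b),
    fderiv_fderiv_apply_eq_iteratedFDeriv_two hf]
  simp

theorem iteratedDeriv_three_comp_parabola_zero (hf : ContDiff ℝ 3 f) :
    iteratedDeriv 3 (f ∘ parabola x b a) 0 =
      iteratedFDeriv ℝ 3 f x ![b, b, b] + 6 * iteratedFDeriv ℝ 2 f x ![b, a] := by
  rw [iteratedDeriv_succ_comp_parabola_zero (n := 2) hf,
    iteratedDeriv_two_comp_parabola_zero (hf.fderiv_apply_const b),
    iteratedDeriv_one_comp_parabola_zero ((hf.fderiv_apply_const a).of_le (by norm_num)),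
    fderiv_fderiv_apply_comm (hf.of_le (by norm_num)) x b a,
    iteratedFDeriv_fderiv_apply_const hf,
    fderiv_fderiv_apply_eq_iteratedFDeriv_two (hf.of_le (by norm_num))]
  norm_num
  ring

theorem iteratedDeriv_four_comp_parabola_zero (hf : ContDiff ℝ 4 f) :
    iteratedDeriv 4 (f ∘ parabola x b a) 0 =
      iteratedFDeriv ℝ 4 f x ![b, b, b, b] + 12 * iteratedFDeriv ℝ 3 f x ![a, b, b]
        + 12 * iteratedFDeriv ℝ 2 f x ![a, a] := by
  have hfb := hf.fderiv_apply_const (n := 3) b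
  have hfa := hf.fderiv_apply_const (n := 3) a
  have hfbb := hfb.fderiv_apply_const (n := 2) b
  have hfba := hfb.fderiv_apply_const (n := 2) a
  have hfab := hfa.fderiv_apply_const (n := 2) b
  have hfbbb := hfbb.fderiv_apply_const (n := 1) b
  rw [iteratedDeriv_succ_comp_parabola_zero (n := 3) hf,
    iteratedDeriv_succ_comp_parabola_zero (n := 2) hfb,
    iteratedDeriv_succ_comp_parabola_zero (n := 1) (hfa.of_le (by norm_num)),
    iteratedDeriv_succ_comp_parabola_zero (n := 1) (hfbb.of_le (by norm_num)),
    iteratedDeriv_succ_comp_parabola_zero (n := 0) (hfbbb.of_le (by norm_num)),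
    iteratedDeriv_succ_comp_parabola_zero (n := 0) (hfba.of_le (by norm_num)),
    iteratedDeriv_succ_comp_parabola_zero (n := 0) (hfab.of_le (by norm_num))]
  simp only [Nat.sub_self, iteratedDeriv_zero, Function.comp_apply, parabola_zero,
    CharP.cast_eq_zero, mul_zero, zero_mul, add_zero]
  -- Directional derivatives commute, so `∂_a ∂_b ∂_b f`, `∂_b ∂_a ∂_b f`, `∂_b ∂_b ∂_a f` agree.
  simp_rw [fderiv_fderiv_apply_comm (hf.of_le (by norm_num)) _ a b]
  rw [fderiv_fderiv_apply_comm (hfb.of_le (by norm_num)) x a b,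
    fderiv_fderiv_fderiv_fderiv_apply_eq_iteratedFDeriv_four hf,
    fderiv_fderiv_fderiv_apply_eq_iteratedFDeriv_three (hf.of_le (by norm_num)),
    fderiv_fderiv_apply_eq_iteratedFDeriv_two (hf.of_le (by norm_num))]
  push_cast
  ring

end Parabola

namespace IsLocalMin

variable {E : Type*} [NormedAddCommGroup E] [NormedSpace ℝ E] {f : E → ℝ} {x : E}

theorem comp_parabola (hmin : IsLocalMin f x) (b a : E) : IsLocalMin (f ∘ parabola x b a) 0 :=
  IsLocalMin.comp_continuous (by simpa using hmin)
    (contDiff_parabola (k := 0)).continuous.continuousAt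

theorem iteratedDeriv_comp_parabola_eq_zero {b : E} (hmin : IsLocalMin f x) (hf : ContDiff ℝ 2 f)
    (hb : ∀ w, iteratedFDeriv ℝ 2 f x ![b, w] = 0) (a : E) {k : ℕ} (hk0 : 0 < k) (hk : k < 3) :
    iteratedDeriv k (f ∘ parabola x b a) 0 = 0 := by
  interval_cases k
  · rw [iteratedDeriv_one_comp_parabola_zero (hf.of_le (by norm_num)), hmin.fderiv_eq_zero]
    rfl
  · rw [iteratedDeriv_two_comp_parabola_zero hf, hb, hmin.fderiv_eq_zero]
    simp

theorem iteratedFDeriv_three_self_eq_zero {b : E} (hmin : IsLocalMin f x) (hf : ContDiff ℝ 3 f)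
    (hb : ∀ w, iteratedFDeriv ℝ 2 f x ![b, w] = 0) :
    iteratedFDeriv ℝ 3 f x ![b, b, b] = 0 := by
  have h := (hmin.comp_parabola b 0).iteratedDeriv_eq_zero_of_odd (n := 3)
    (hf.comp contDiff_parabola) (by decide)
    fun k => hmin.iteratedDeriv_comp_parabola_eq_zero (hf.of_le (by norm_num)) hb 0
  rwa [iteratedDeriv_three_comp_parabola_zero hf, hb, mul_zero, add_zero] at h

theorem iteratedFDeriv_two_add_iteratedFDeriv_three_nonneg {b : E} (hmin : IsLocalMin f x)
    (hf : ContDiff ℝ 4 f) (hb : ∀ w, iteratedFDeriv ℝ 2 f x ![b, w] = 0)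
    (hb4 : iteratedFDeriv ℝ 4 f x ![b, b, b, b] = 0) (a : E) :
    0 ≤ iteratedFDeriv ℝ 2 f x ![a, a] + iteratedFDeriv ℝ 3 f x ![a, b, b] := by
  have h := (hmin.comp_parabola b a).iteratedDeriv_nonneg (n := 4)
    (hf.comp contDiff_parabola) (by norm_num) ?_
  · rw [iteratedDeriv_four_comp_parabola_zero hf, hb4] at h
    linarith
  · intro k hk0 hk4
    obtain hk3 | rfl := Nat.lt_succ_iff_lt_or_eq.1 hk4
    · exact hmin.iteratedDeriv_comp_parabola_eq_zero (hf.of_le (by norm_num)) hb a hk0 hk3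
    · rw [iteratedDeriv_three_comp_parabola_zero (hf.of_le (by norm_num)),
        hmin.iteratedFDeriv_three_self_eq_zero (hf.of_le (by norm_num)) hb, hb]
      simp

theorem iteratedFDeriv_three_eq_zero_s9 {b : E} (hmin : IsLocalMin f x) (hf : ContDiff ℝ 4 f)
    (hb : ∀ w, iteratedFDeriv ℝ 2 f x ![b, w] = 0)
    (hb4 : iteratedFDeriv ℝ 4 f x ![b, b, b, b] = 0) (a : E) :
    iteratedFDeriv ℝ 3 f x ![a, b, b] = 0 := by
  refine eq_zero_of_forall_sq_mul_add_mul_nonneg (p := iteratedFDeriv ℝ 2 f x ![a, a])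
    fun ε => ?_
  have h := hmin.iteratedFDeriv_two_add_iteratedFDeriv_three_nonneg hf hb hb4 (ε • a)
  rwa [ContinuousMultilinearMap.map_smul_pair, ContinuousMultilinearMap.map_vecCons_smul] at h

end IsLocalMin

/-- Sixth-order setting: with F₁ = ker ∇²f(x*), E₁ = F₁ᗮ,
F₂ = {h ∈ F₁ : ∀ h' ∈ F₁, ∇⁴f(x*)·h⊗h'^{⊗3} = 0}, the odd cross term
∇³f(x*)·p_{E₁}(h)⊗p_{F₂}(h)^{⊗2} vanishes. -/
theorem stmt9 (d : ℕ) (f : EuclideanSpace ℝ (Fin d) → ℝ) (x : EuclideanSpace ℝ (Fin d))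
    (hf : ContDiff ℝ 6 f) (hmin : IsLocalMin f x)
    (F₁ F₂ : Submodule ℝ (EuclideanSpace ℝ (Fin d)))
    (hF₁ : ∀ v, v ∈ F₁ ↔ ∀ w : EuclideanSpace ℝ (Fin d), iteratedFDeriv ℝ 2 f x ![v, w] = 0)
    (hF₂ : ∀ v, v ∈ F₂ ↔ v ∈ F₁ ∧ ∀ w ∈ F₁, iteratedFDeriv ℝ 4 f x ![v, w, w, w] = 0)
    (h : EuclideanSpace ℝ (Fin d)) :
    iteratedFDeriv ℝ 3 f x
      ![(F₁ᗮ.orthogonalProjectionOnto h : EuclideanSpace ℝ (Fin d)),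
        (F₂.orthogonalProjectionOnto h : EuclideanSpace ℝ (Fin d)),
        (F₂.orthogonalProjectionOnto h : EuclideanSpace ℝ (Fin d))] = 0 := by
  set b : EuclideanSpace ℝ (Fin d) :=
    (F₂.orthogonalProjectionOnto h : EuclideanSpace ℝ (Fin d))
  obtain ⟨hbF₁, hb4⟩ := (hF₂ b).1 (F₂.orthogonalProjectionOnto h).2
  exact hmin.iteratedFDeriv_three_eq_zero_s9 (hf.of_le (by norm_num)) ((hF₁ b).1 hbF₁)
    (hb4 b hbF₁) _
end

section
/- Let p ≥ 1 and consider f(x,y) = x⁴ + y^{10} + x²y⁴ on ℝ². Then f has a strict polynomial minimum at 0 of order 10, yet (1/t) f(t^{1/4}, t^{1/10}) = (1/t)(t + t + t^{9/10}) → +∞ as t → 0⁺. Hence the scaling with exponents α = (1/4, 1/10) fails to produce a finite limit. -/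
open Topology Filter

/-- Counter-example at order 10: f(x,y) = x⁴ + y¹⁰ + x²y⁴ has a strict polynomial
minimum at 0 of order 10 (f itself, which equals its degree-10 Taylor polynomial,
is positive away from 0, while no lower-order truncation — x⁴ + x²y⁴ or x⁴ — is
positive on a punctured ball), yet (1/t) f(t^{1/4}, t^{1/10}) → +∞ as t → 0⁺. -/
theorem stmt14 :
    (∀ x y : ℝ, (x, y) ≠ (0, 0) → 0 < x ^ 4 + y ^ 10 + x ^ 2 * y ^ 4) ∧
    (¬ ∃ r > (0:ℝ), ∀ x y : ℝ, (x, y) ≠ (0, 0) → x ^ 2 + y ^ 2 < r ^ 2 →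
      0 < x ^ 4 + x ^ 2 * y ^ 4) ∧
    (¬ ∃ r > (0:ℝ), ∀ x y : ℝ, (x, y) ≠ (0, 0) → x ^ 2 + y ^ 2 < r ^ 2 →
      0 < x ^ 4) ∧
    Tendsto (fun t : ℝ => (1 / t) *
        ((t ^ ((1:ℝ) / 4)) ^ 4 + (t ^ ((1:ℝ) / 10)) ^ 10
          + (t ^ ((1:ℝ) / 4)) ^ 2 * (t ^ ((1:ℝ) / 10)) ^ 4))
      (𝓝[>] 0) atTop := by
  refine ⟨?_, ?_, ?_, ?_⟩
  · intro x y h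
    rcases eq_or_ne x 0 with hx | hx
    · have hy : y ≠ 0 := by
        intro hy; exact h (by simp [hx, hy])
      subst hx
      have : 0 < y ^ 10 := by positivity
      simpa using this
    · have h1 : 0 < x ^ 4 := by positivity
      have h2 : 0 ≤ y ^ 10 := by positivity
      have h3 : 0 ≤ x ^ 2 * y ^ 4 := by positivity
      linarith
  · rintro ⟨r, hr, h⟩
    have := h 0 (r/2) (by simp [hr.ne']) (by nlinarith)
    simp at this
  · rintro ⟨r, hr, h⟩
    have := h 0 (r/2) (by simp [hr.ne']) (by nlinarith)
    simp at this
  · have h1 : Tendsto (fun t : ℝ => t ^ (-(1:ℝ)/10)) (𝓝[>] 0) atTop := by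
      have := (tendsto_rpow_atTop (by norm_num : (0:ℝ) < 1/10)).comp
        tendsto_inv_nhdsGT_zero
      refine this.congr' ?_
      filter_upwards [self_mem_nhdsWithin] with t (ht : 0 < t)
      rw [Function.comp_apply, ← Real.rpow_neg_one t, ← Real.rpow_mul ht.le]
      norm_num
    have h2 : Tendsto (fun t : ℝ => 2 + t ^ (-(1:ℝ)/10)) (𝓝[>] 0) atTop :=
      tendsto_atTop_add_const_left _ 2 h1
    refine h2.congr' ?_
    filter_upwards [self_mem_nhdsWithin] with t (ht : 0 < t)
    have e1 : (t ^ ((1:ℝ)/4)) ^ 4 = t := by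
      rw [← Real.rpow_natCast _ 4, ← Real.rpow_mul ht.le]; norm_num
    have e2 : (t ^ ((1:ℝ)/10)) ^ 10 = t := by
      rw [← Real.rpow_natCast _ 10, ← Real.rpow_mul ht.le]; norm_num
    have e3 : (t ^ ((1:ℝ)/4)) ^ 2 * (t ^ ((1:ℝ)/10)) ^ 4 = t ^ ((9:ℝ)/10) := by
      rw [← Real.rpow_natCast (t ^ ((1:ℝ)/4)) 2, ← Real.rpow_natCast (t ^ ((1:ℝ)/10)) 4,
        ← Real.rpow_mul ht.le, ← Real.rpow_mul ht.le, ← Real.rpow_add ht]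
      norm_num
    rw [e1, e2, e3, mul_add, mul_add]
    have : 1 / t * t ^ ((9:ℝ)/10) = t ^ (-(1:ℝ)/10) := by
      rw [one_div, ← Real.rpow_neg_one t, ← Real.rpow_add ht]
      norm_num
    rw [this, one_div, inv_mul_cancel₀ ht.ne']
    ring
end

section
/- Let g : ℝ^d → [0,∞) be a polynomial satisfying the homogeneity property g(Σ_{k=1}^p t^{1/(2k)} p_{A_k}(h)) = t·g(h) for all t ≥ 0 and h ∈ ℝ^d, where ℝ^d = A_1 ⊕ ⋯ ⊕ A_p is an orthogonal decomposition with projections p_{A_k}. If g is coercive (g(h) → ∞ as ‖h‖ → ∞), then there exists R ≥ 1 such that g(h) ≥ ‖h‖/R for all h with ‖h‖ ≥ R; in particular e^{-g} ∈ L¹(ℝ^d). -/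
/-!
Write `δ_t h = ∑ₖ t^{e k} p_{A_k}(h)` for the dilations, so that `g (δ_t h) = t g(h)`. Since every
exponent `e k` is at most `1/2`, `δ_s` with `s ≤ 1` shrinks norms by at most a factor `√s`. Given
`R` with `g ≥ 1` outside the ball of radius `R` and `‖h‖ ≥ R`, put `t = ‖h‖ / R ≥ 1`: then
`h' = δ_{1/t} h` still has `‖h'‖ ≥ R`, hence `g h = t g(h') ≥ ‖h‖ / R`. This linear growth gives
`e^{-g} ≤ e · e^{-‖h‖/R}`, which is integrable against any additive Haar measure.
-/

open MeasureTheory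

section WeightedDilation

variable {E ι : Type*} [NormedAddCommGroup E] [InnerProductSpace ℝ E] [Fintype ι]
  {A : ι → Submodule ℝ E} [∀ k, (A k).HasOrthogonalProjection]

theorem OrthogonalFamily.orthogonalProjectionOnto_sum
    (hA : OrthogonalFamily ℝ (fun k => A k) fun k => (A k).subtypeₗᵢ) (l : ∀ k, A k) (j : ι) :
    (A j).orthogonalProjectionOnto (∑ k, (l k : E)) = l j := by
  classical
  rw [map_sum, Finset.sum_eq_single j (fun k _ hkj => ?_) (by simp),
    Submodule.orthogonalProjectionOnto_mem_subspace_eq_self]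
  exact Submodule.orthogonalProjectionOnto_apply_of_mem_orthogonal
    (hA.isOrtho hkj (l k).2)

variable (A) in
noncomputable def weightedDilation (e : ι → ℝ) (t : ℝ) (h : E) : E :=
  ∑ k, t ^ e k • ((A k).orthogonalProjectionOnto h : E)

variable {e : ι → ℝ}

theorem weightedDilation_one (hdecomp : ∀ h : E, ∑ k, ((A k).orthogonalProjectionOnto h : E) = h)
    (h : E) : weightedDilation A e 1 h = h := by
  simp only [weightedDilation, Real.one_rpow, one_smul]
  exact hdecomp h

variable (hA : OrthogonalFamily ℝ (fun k => A k) fun k => (A k).subtypeₗᵢ)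
include hA

theorem weightedDilation_weightedDilation {s t : ℝ} (hs : 0 ≤ s) (ht : 0 ≤ t) (h : E) :
    weightedDilation A e s (weightedDilation A e t h) = weightedDilation A e (s * t) h := by
  have hproj (k : ι) : (A k).orthogonalProjectionOnto (weightedDilation A e t h) =
      t ^ e k • (A k).orthogonalProjectionOnto h := by
    simpa [weightedDilation] using
      hA.orthogonalProjectionOnto_sum (fun k => t ^ e k • (A k).orthogonalProjectionOnto h) k
  rw [weightedDilation]
  simp only [hproj, Submodule.coe_smul, smul_smul, ← Real.mul_rpow hs ht]
  rfl

theorem norm_sq_weightedDilation (t : ℝ) (h : E) :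
    ‖weightedDilation A e t h‖ ^ 2 =
      ∑ k, (t ^ e k) ^ 2 * ‖((A k).orthogonalProjectionOnto h : E)‖ ^ 2 := by
  simpa [weightedDilation, norm_smul, mul_pow] using
    hA.norm_sum (fun k => t ^ e k • (A k).orthogonalProjectionOnto h) Finset.univ

theorem mul_norm_sq_le_norm_sq_weightedDilation
    (hdecomp : ∀ h : E, ∑ k, ((A k).orthogonalProjectionOnto h : E) = h)
    (he : ∀ k, e k ≤ 1 / 2) {t : ℝ} (ht₀ : 0 < t) (ht₁ : t ≤ 1) (h : E) :
    t * ‖h‖ ^ 2 ≤ ‖weightedDilation A e t h‖ ^ 2 := by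
  conv_lhs => rw [← weightedDilation_one (e := e) hdecomp h]
  rw [norm_sq_weightedDilation hA, norm_sq_weightedDilation hA, Finset.mul_sum]
  simp only [Real.one_rpow, one_pow, one_mul]
  gcongr with k
  calc t = (t ^ (1 / 2 : ℝ)) ^ 2 := by rw [← Real.sqrt_eq_rpow, Real.sq_sqrt ht₀.le]
    _ ≤ (t ^ e k) ^ 2 :=
        pow_le_pow_left₀ (by positivity) (Real.rpow_le_rpow_of_exponent_ge ht₀ ht₁ (he k)) 2

theorem div_le_of_weightedDilation_homogeneous
    (hdecomp : ∀ h : E, ∑ k, ((A k).orthogonalProjectionOnto h : E) = h)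
    (he : ∀ k, e k ≤ 1 / 2) {g : E → ℝ}
    (hhom : ∀ t : ℝ, 0 ≤ t → ∀ h, g (weightedDilation A e t h) = t * g h)
    {R : ℝ} (hR : 0 < R) (hg : ∀ h, R ≤ ‖h‖ → 1 ≤ g h) {h : E} (hh : R ≤ ‖h‖) :
    ‖h‖ / R ≤ g h := by
  set t := ‖h‖ / R
  have ht : 1 ≤ t := (one_le_div hR).2 hh
  have ht₀ : 0 < t := one_pos.trans_le ht
  set h' := weightedDilation A e t⁻¹ h
  have hh' : weightedDilation A e t h' = h := by
    rw [weightedDilation_weightedDilation hA ht₀.le (inv_nonneg.2 ht₀.le), mul_inv_cancel₀ ht₀.ne',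
      weightedDilation_one hdecomp]
  have hRh' : R ≤ ‖h'‖ := by
    refine (pow_le_pow_iff_left₀ hR.le (norm_nonneg _) two_ne_zero).1 ?_
    calc R ^ 2 ≤ R * ‖h‖ := by nlinarith
      _ = t⁻¹ * ‖h‖ ^ 2 := by simp only [t]; field_simp
      _ ≤ ‖h'‖ ^ 2 := mul_norm_sq_le_norm_sq_weightedDilation hA hdecomp he (inv_pos.2 ht₀)
            (inv_le_one_of_one_le₀ ht) h
  calc t = t * 1 := (mul_one t).symm
    _ ≤ t * g h' := by gcongr; exact hg h' hRh'
    _ = g h := by rw [← hhom t ht₀.le, hh']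

end WeightedDilation

theorem integrable_exp_neg_mul_norm {E : Type*} [NormedAddCommGroup E] [NormedSpace ℝ E]
    [FiniteDimensional ℝ E] [MeasurableSpace E] [BorelSpace E] (μ : Measure E)
    [μ.IsAddHaarMeasure] {c : ℝ} (hc : 0 < c) :
    Integrable (fun x => Real.exp (-c * ‖x‖)) μ := by
  rcases subsingleton_or_nontrivial E with hE | hE
  · exact (integrable_const 1).congr (.of_forall fun x => by simp [Subsingleton.elim x 0])
  rw [integrable_fun_norm_addHaar μ (f := fun y => Real.exp (-c * y))]
  refine (integrableOn_rpow_mul_exp_neg_mul_rpow (s := ((Module.finrank ℝ E - 1 : ℕ) : ℝ))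
    (by linarith [Nat.cast_nonneg (α := ℝ) (Module.finrank ℝ E - 1)]) one_pos hc).congr_fun
    (fun y _ => ?_) measurableSet_Ioi
  simp [Real.rpow_natCast]

theorem integrable_exp_neg_of_div_le {E : Type*} [NormedAddCommGroup E] [NormedSpace ℝ E]
    [FiniteDimensional ℝ E] [MeasurableSpace E] [BorelSpace E] (μ : Measure E)
    [μ.IsAddHaarMeasure] {g : E → ℝ} (hg : Measurable g) (hg₀ : ∀ h, 0 ≤ g h) {R : ℝ}
    (hR : 0 < R) (hgR : ∀ h, R ≤ ‖h‖ → ‖h‖ / R ≤ g h) :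
    Integrable (fun h => Real.exp (-g h)) μ := by
  have hle (h : E) : ‖h‖ / R ≤ 1 + g h := by
    rcases le_or_gt R ‖h‖ with hh | hh
    · linarith [hgR h hh]
    · linarith [hg₀ h, (div_lt_one hR).2 hh]
  refine ((integrable_exp_neg_mul_norm μ (inv_pos.2 hR)).const_mul (Real.exp 1)).mono'
    (by fun_prop) (.of_forall fun h => ?_)
  rw [Real.norm_of_nonneg (Real.exp_pos _).le, ← Real.exp_add]
  exact Real.exp_le_exp.2 (by linarith [hle h, div_eq_inv_mul ‖h‖ R])

/-- A nonnegative coercive polynomial g with the weighted homogeneity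
g(Σ_k t^{1/(2k)} p_{A_k}(h)) = t g(h) (for an orthogonal decomposition
ℝ^d = A₁ ⊕ ⋯ ⊕ A_p) satisfies a linear lower bound g(h) ≥ ‖h‖/R outside a ball,
and in particular e^{-g} is integrable. -/
theorem stmt15 (d p : ℕ) (g : EuclideanSpace ℝ (Fin d) → ℝ)
    (A : Fin p → Submodule ℝ (EuclideanSpace ℝ (Fin d)))
    (horth : ∀ i j, i ≠ j → ∀ u ∈ A i, ∀ v ∈ A j, (inner ℝ u v : ℝ) = 0)
    (hdecomp : ∀ h : EuclideanSpace ℝ (Fin d),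
      (∑ k, ((A k).orthogonalProjectionOnto h : EuclideanSpace ℝ (Fin d))) = h)
    (hpoly : ∃ P : MvPolynomial (Fin d) ℝ,
      ∀ y : EuclideanSpace ℝ (Fin d), g y = MvPolynomial.eval (fun i => y i) P)
    (hnonneg : ∀ h, 0 ≤ g h)
    (hhom : ∀ t : ℝ, 0 ≤ t → ∀ h : EuclideanSpace ℝ (Fin d),
      g (∑ k : Fin p, t ^ ((1:ℝ) / ((2 * ((k : ℕ) + 1) : ℕ) : ℝ)) •
        ((A k).orthogonalProjectionOnto h : EuclideanSpace ℝ (Fin d))) = t * g h)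
    (hcoercive : ∀ C : ℝ, ∃ R : ℝ, ∀ h : EuclideanSpace ℝ (Fin d), R ≤ ‖h‖ → C ≤ g h) :
    (∃ R : ℝ, 1 ≤ R ∧ ∀ h : EuclideanSpace ℝ (Fin d), R ≤ ‖h‖ → ‖h‖ / R ≤ g h) ∧
    Integrable (fun h : EuclideanSpace ℝ (Fin d) => Real.exp (-g h)) := by
  have hA : OrthogonalFamily ℝ (fun k => A k) fun k => (A k).subtypeₗᵢ :=
    .of_pairwise fun i j hij => Submodule.isOrtho_iff_inner_eq.2 (horth i j hij)
  have he (k : Fin p) : (1 : ℝ) / ((2 * ((k : ℕ) + 1) : ℕ) : ℝ) ≤ 1 / 2 :=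
    one_div_le_one_div_of_le two_pos (by exact_mod_cast (by omega : 2 ≤ 2 * ((k : ℕ) + 1)))
  obtain ⟨R₀, hR₀⟩ := hcoercive 1
  have hgR (h : EuclideanSpace ℝ (Fin d)) (hh : max 1 R₀ ≤ ‖h‖) : ‖h‖ / max 1 R₀ ≤ g h :=
    div_le_of_weightedDilation_homogeneous hA hdecomp he hhom (by positivity)
      (fun h' hh' => hR₀ h' ((le_max_right 1 R₀).trans hh')) hh
  obtain ⟨P, hP⟩ := hpoly
  have hg : Continuous g := by
    rw [funext hP]
    exact (MvPolynomial.continuous_eval P).comp (PiLp.continuous_ofLp 2 _)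
  exact ⟨⟨max 1 R₀, le_max_left 1 R₀, hgR⟩,
    integrable_exp_neg_of_div_le volume hg.measurable hnonneg (by positivity) hgR⟩
end

section
/- Let d ≥ 1 and let f : ℝ^d → ℝ be a coercive function with e^{-f} ∈ L¹(ℝ^d) such that f(x) = e^{-1/‖x‖²} for x ∈ B(0,1) (with f(0)=0) and f(x) > a for some a > 0 and all x outside B(0,1). If X_t has density proportional to e^{-f(x)/t}, then log^{1/2}(1/t) · X_t converges in law as t → 0⁺ to the uniform distribution on the unit ball B(0,1). -/
/-!
Substitute `y = √(log (1/t)) • x` in numerator and denominator; the Jacobians cancel in the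
ratio. In the new variable, on the ball of radius `√(log (1/t))` the weight `exp (-f x / t)`
becomes `exp (-exp (log (1/t) * (1 - 1/‖y‖²)))`, which tends to `1` for `‖y‖ < 1` and to `0`
for `‖y‖ > 1` and is dominated by `exp (1 - ‖y‖²)`. Outside that ball `f > a` gives the
factor `exp (-a (1/t - 1))`, which beats the polylogarithmic Jacobian `log (1/t) ^ (d/2)`.
-/

open MeasureTheory Topology Filter Metric Set Real

noncomputable def sqrtLogInv (t : ℝ) : ℝ := √(log (1 / t))

lemma log_one_div_pos {t : ℝ} (ht : t ∈ Ioo (0 : ℝ) 1) : 0 < log (1 / t) :=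
  log_pos (one_lt_one_div ht.1 ht.2)

lemma sqrtLogInv_pos {t : ℝ} (ht : t ∈ Ioo (0 : ℝ) 1) : 0 < sqrtLogInv t :=
  sqrt_pos.2 (log_one_div_pos ht)

lemma sqrtLogInv_sq {t : ℝ} (ht : t ∈ Ioo (0 : ℝ) 1) : sqrtLogInv t ^ 2 = log (1 / t) :=
  sq_sqrt (log_one_div_pos ht).le

lemma Ioo_zero_one_mem_nhdsGT : Ioo (0 : ℝ) 1 ∈ 𝓝[>] (0 : ℝ) := Ioo_mem_nhdsGT one_pos

lemma tendsto_one_div_nhdsGT_zero : Tendsto (fun t : ℝ => 1 / t) (𝓝[>] 0) atTop := by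
  simpa only [one_div] using tendsto_inv_nhdsGT_zero

lemma tendsto_log_one_div_nhdsGT_zero : Tendsto (fun t : ℝ => log (1 / t)) (𝓝[>] 0) atTop :=
  tendsto_log_atTop.comp tendsto_one_div_nhdsGT_zero

lemma tendsto_sqrtLogInv : Tendsto sqrtLogInv (𝓝[>] 0) atTop :=
  tendsto_sqrt_atTop.comp tendsto_log_one_div_nhdsGT_zero

lemma tendsto_exp_neg_mul_mul_sqrtLogInv_pow {a : ℝ} (ha : 0 < a) (n : ℕ) :
    Tendsto (fun t => exp (-a * (1 / t - 1)) * sqrtLogInv t ^ n) (𝓝[>] 0) (𝓝 0) := by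
  have hlim : Tendsto (fun s : ℝ => exp a * (s ^ n * exp (-a * s))) atTop (𝓝 0) := by
    simpa [rpow_natCast] using
      (tendsto_rpow_mul_exp_neg_mul_atTop_nhds_zero (n : ℝ) a ha).const_mul (exp a)
  refine squeeze_zero' ?_ ?_ (hlim.comp tendsto_one_div_nhdsGT_zero)
  · filter_upwards [Ioo_zero_one_mem_nhdsGT] with t ht
    exact mul_nonneg (exp_pos _).le (pow_nonneg (sqrtLogInv_pos ht).le n)
  · filter_upwards [Ioo_zero_one_mem_nhdsGT] with t ht
    have hs : 1 ≤ 1 / t := one_le_one_div ht.1 ht.2.le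
    -- with `s = 1 / t ≥ 1`: `log s ≤ s ≤ s ^ 2`
    have hle : sqrtLogInv t ≤ 1 / t :=
      (sqrt_le_left (by linarith)).2 ((log_le_self (by linarith)).trans (by nlinarith))
    calc exp (-a * (1 / t - 1)) * sqrtLogInv t ^ n
        = exp a * exp (-a * (1 / t)) * sqrtLogInv t ^ n := by
          rw [← exp_add]; ring_nf
      _ ≤ exp a * exp (-a * (1 / t)) * (1 / t) ^ n := by
          gcongr
          exact (sqrtLogInv_pos ht).le
      _ = exp a * ((1 / t) ^ n * exp (-a * (1 / t))) := by ring

lemma exp_neg_div_le {a u t : ℝ} (ht : t ∈ Ioo (0 : ℝ) 1) (hau : a ≤ u) :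
    exp (-u / t) ≤ exp (-a * (1 / t - 1)) * exp (-u) := by
  rw [← exp_add, exp_le_exp, neg_div, div_eq_mul_one_div]
  have hs : 0 ≤ 1 / t - 1 := by linarith [one_le_one_div ht.1 ht.2.le]
  nlinarith [mul_le_mul_of_nonneg_right hau hs]

lemma exp_neg_one_div_sq_mul_exp {L r : ℝ} (hL : 0 < L) (hr : r ≠ 0) :
    exp (-1 / (r / √L) ^ 2) * exp L = exp (L * (1 - 1 / r ^ 2)) := by
  rw [← exp_add, div_pow, sq_sqrt hL.le]
  congr 1
  field_simp
  ring

/-- The Gibbs weight `exp (-f x / t)` in the variable `y = sqrtLogInv t • x`. -/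
noncomputable def rescaledGibbs {E : Type*} [SMul ℝ E] (f : E → ℝ) (t : ℝ) (y : E) : ℝ :=
  exp (-f ((sqrtLogInv t)⁻¹ • y) / t)

lemma nonneg_of_eq_exp_neg_one_div_sq_on_ball {E : Type*} [NormedAddCommGroup E] {f : E → ℝ}
    (hball : ∀ x ∈ ball (0 : E) 1, x ≠ 0 → f x = exp (-1 / ‖x‖ ^ 2)) (h0 : f 0 = 0)
    {a : ℝ} (ha : 0 < a) (hout : ∀ x ∉ ball (0 : E) 1, a < f x) (x : E) : 0 ≤ f x := by
  by_cases hx : x ∈ ball (0 : E) 1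
  · rcases eq_or_ne x 0 with rfl | hx0
    · exact h0.ge
    · rw [hball x hx hx0]; positivity
  · exact (ha.trans (hout x hx)).le

section Pointwise

variable {E : Type*} [NormedAddCommGroup E] [NormedSpace ℝ E] {f : E → ℝ} {t : ℝ} {y : E}

lemma rescaledGibbs_le_one (hf0 : ∀ x, 0 ≤ f x) (ht : 0 < t) : rescaledGibbs f t y ≤ 1 :=
  exp_le_one_iff.2 (div_nonpos_of_nonpos_of_nonneg (neg_nonpos.2 (hf0 _)) ht.le)

lemma rescaledGibbs_eq (hball : ∀ x ∈ ball (0 : E) 1, x ≠ 0 → f x = exp (-1 / ‖x‖ ^ 2))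
    (ht : t ∈ Ioo (0 : ℝ) 1) (hy0 : y ≠ 0) (hyc : y ∈ ball (0 : E) (sqrtLogInv t)) :
    rescaledGibbs f t y = exp (-exp (log (1 / t) * (1 - 1 / ‖y‖ ^ 2))) := by
  have hc := sqrtLogInv_pos ht
  have hnorm : ‖(sqrtLogInv t)⁻¹ • y‖ = ‖y‖ / sqrtLogInv t := by
    rw [norm_smul, norm_inv, norm_of_nonneg hc.le, inv_mul_eq_div]
  have hmem : (sqrtLogInv t)⁻¹ • y ∈ ball (0 : E) 1 := by
    rwa [mem_ball_zero_iff, hnorm, div_lt_one hc, ← mem_ball_zero_iff]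
  rw [rescaledGibbs, hball _ hmem (smul_ne_zero (inv_ne_zero hc.ne') hy0), hnorm, sqrtLogInv,
    ← exp_neg_one_div_sq_mul_exp (log_one_div_pos ht) (norm_ne_zero_iff.2 hy0),
    exp_log (one_div_pos.2 ht.1), neg_div, mul_one_div]

lemma rescaledGibbs_le_exp_one_sub_norm_sq
    (hball : ∀ x ∈ ball (0 : E) 1, x ≠ 0 → f x = exp (-1 / ‖x‖ ^ 2)) (hf0 : ∀ x, 0 ≤ f x)
    (ht : t ∈ Ioo (0 : ℝ) 1) (hyc : y ∈ ball (0 : E) (sqrtLogInv t)) :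
    rescaledGibbs f t y ≤ exp (1 - ‖y‖ ^ 2) := by
  rcases le_or_gt ‖y‖ 1 with hy1 | hy1
  · exact (rescaledGibbs_le_one hf0 ht.1).trans (one_le_exp (by nlinarith [norm_nonneg y]))
  have hy0 : y ≠ 0 := norm_pos_iff.1 (one_pos.trans hy1)
  rw [rescaledGibbs_eq hball ht hy0 hyc, exp_le_exp]
  -- `exp X ≥ X + 1 ≥ ‖y‖ ^ 2` for the exponent `X`, because `‖y‖ ^ 2 ≤ log (1 / t)`
  have hyL : ‖y‖ ^ 2 ≤ log (1 / t) := by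
    rw [← sqrtLogInv_sq ht]
    exact pow_le_pow_left₀ (norm_nonneg y) (mem_ball_zero_iff.1 hyc).le 2
  have hcoef : 0 ≤ 1 - 1 / ‖y‖ ^ 2 := by
    rw [sub_nonneg, div_le_one (by positivity)]; nlinarith
  have hexpo : ‖y‖ ^ 2 - 1 ≤ log (1 / t) * (1 - 1 / ‖y‖ ^ 2) := by
    calc ‖y‖ ^ 2 - 1 = ‖y‖ ^ 2 * (1 - 1 / ‖y‖ ^ 2) := by field_simp
      _ ≤ _ := mul_le_mul_of_nonneg_right hyL hcoef
  linarith [add_one_le_exp (log (1 / t) * (1 - 1 / ‖y‖ ^ 2))]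

lemma tendsto_indicator_rescaledGibbs
    (hball : ∀ x ∈ ball (0 : E) 1, x ≠ 0 → f x = exp (-1 / ‖x‖ ^ 2)) (h0 : f 0 = 0)
    (hy : ‖y‖ ≠ 1) :
    Tendsto (fun t => (ball (0 : E) (sqrtLogInv t)).indicator (rescaledGibbs f t) y) (𝓝[>] 0)
      (𝓝 ((ball (0 : E) 1).indicator 1 y)) := by
  rcases eq_or_ne y 0 with rfl | hy0
  · refine tendsto_const_nhds.congr' ?_
    filter_upwards [Ioo_zero_one_mem_nhdsGT] with t ht
    simp [rescaledGibbs, h0, sqrtLogInv_pos ht]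
  have hev : ∀ᶠ t in 𝓝[>] 0, (ball (0 : E) (sqrtLogInv t)).indicator (rescaledGibbs f t) y
      = exp (-exp (log (1 / t) * (1 - 1 / ‖y‖ ^ 2))) := by
    filter_upwards [Ioo_zero_one_mem_nhdsGT, tendsto_sqrtLogInv.eventually_gt_atTop ‖y‖]
      with t ht hyc
    have hyc : y ∈ ball (0 : E) (sqrtLogInv t) := mem_ball_zero_iff.2 hyc
    rw [indicator_of_mem hyc, rescaledGibbs_eq hball ht hy0 hyc]
  refine Tendsto.congr' (EventuallyEq.symm hev) ?_
  have hy2 : 0 < ‖y‖ ^ 2 := by positivity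
  rcases hy.lt_or_gt with hy1 | hy1
  · have hcoef : 1 - 1 / ‖y‖ ^ 2 < 0 := by
      rw [sub_neg, one_lt_div hy2]; nlinarith [norm_nonneg y]
    rw [indicator_of_mem (mem_ball_zero_iff.2 hy1), Pi.one_apply]
    have hneg := (tendsto_exp_atBot.comp
      (tendsto_log_one_div_nhdsGT_zero.atTop_mul_const_of_neg hcoef)).neg
    rw [neg_zero] at hneg
    simpa only [exp_zero, Function.comp_def] using (continuous_exp.tendsto 0).comp hneg
  · have hcoef : 0 < 1 - 1 / ‖y‖ ^ 2 := by
      rw [sub_pos, div_lt_one hy2]; nlinarith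
    rw [indicator_of_notMem (by simpa using hy1.le)]
    exact tendsto_exp_atBot.comp (tendsto_neg_atTop_atBot.comp
      (tendsto_exp_atTop.comp (tendsto_log_one_div_nhdsGT_zero.atTop_mul_const hcoef)))

end Pointwise

section Integral

variable {E : Type*} [NormedAddCommGroup E] [InnerProductSpace ℝ E] [FiniteDimensional ℝ E]
  [MeasurableSpace E] [BorelSpace E] {f : E → ℝ}

lemma integrable_exp_one_sub_norm_sq : Integrable (fun y : E => exp (1 - ‖y‖ ^ 2)) := by
  have h := (GaussianFourier.integrable_cexp_neg_mul_sq_norm_add (V := E) (b := 1)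
    (by norm_num) 0 0).norm.const_mul (exp 1)
  refine h.congr (Eventually.of_forall fun y => ?_)
  simp [Complex.norm_exp, ← Complex.ofReal_pow, sub_eq_add_neg, exp_add]

lemma integrable_rescaledGibbs (hmeas : Measurable f)
    (hint : Integrable (fun x : E => exp (-f x))) (hf0 : ∀ x, 0 ≤ f x)
    {t : ℝ} (ht : t ∈ Ioo (0 : ℝ) 1) : Integrable (rescaledGibbs f t) := by
  have h : Integrable (fun x : E => exp (-f x / t)) := by
    refine hint.mono (by fun_prop) (Eventually.of_forall fun x => ?_)
    simpa using exp_neg_div_le (a := 0) ht (hf0 x)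
  exact h.comp_smul (inv_ne_zero (sqrtLogInv_pos ht).ne')

lemma integral_smul_mul_exp_neg_div (g : E → ℝ) {t : ℝ} (ht : t ∈ Ioo (0 : ℝ) 1) :
    ∫ x, g (sqrtLogInv t • x) * exp (-f x / t)
      = (sqrtLogInv t ^ Module.finrank ℝ E)⁻¹ * ∫ y, g y * rescaledGibbs f t y := by
  have hc := sqrtLogInv_pos ht
  simpa [rescaledGibbs, inv_smul_smul₀ hc.ne'] using
    Measure.integral_comp_smul_of_nonneg volume (fun y => g y * rescaledGibbs f t y)
      (sqrtLogInv t) (hR := hc.le)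

lemma tendsto_setIntegral_ball_sqrtLogInv (hmeas : Measurable f)
    (hball : ∀ x ∈ ball (0 : E) 1, x ≠ 0 → f x = exp (-1 / ‖x‖ ^ 2)) (h0 : f 0 = 0)
    (hf0 : ∀ x, 0 ≤ f x) (ψ : BoundedContinuousFunction E ℝ) :
    Tendsto (fun t => ∫ y in ball (0 : E) (sqrtLogInv t), ψ y * rescaledGibbs f t y) (𝓝[>] 0)
      (𝓝 (∫ y in ball (0 : E) 1, ψ y)) := by
  have hsphere : ∀ᵐ y : E, ‖y‖ ≠ 1 :=
    measure_mono_null (fun y hy => mem_sphere_zero_iff_norm.2 (not_not.1 hy))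
      (Measure.addHaar_sphere_of_ne_zero volume 0 one_ne_zero)
  simp_rw [← integral_indicator measurableSet_ball, indicator_mul_right]
  refine tendsto_integral_filter_of_dominated_convergence (fun y => ‖ψ‖ * exp (1 - ‖y‖ ^ 2))
    (Eventually.of_forall fun t => ?_) ?_ (integrable_exp_one_sub_norm_sq.const_mul _) ?_
  · have hmeas_t : Measurable (rescaledGibbs f t) := by unfold rescaledGibbs; fun_prop
    exact ψ.continuous.aestronglyMeasurable.mul
      (hmeas_t.indicator measurableSet_ball).aestronglyMeasurable
  · filter_upwards [Ioo_zero_one_mem_nhdsGT] with t ht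
    refine Eventually.of_forall fun y => ?_
    rw [norm_mul]
    refine mul_le_mul (ψ.norm_coe_le_norm y) ?_ (norm_nonneg _) (norm_nonneg _)
    by_cases hy : y ∈ ball (0 : E) (sqrtLogInv t)
    · rw [indicator_of_mem hy, norm_of_nonneg (r := rescaledGibbs f t y) (exp_pos _).le]
      exact rescaledGibbs_le_exp_one_sub_norm_sq hball hf0 ht hy
    · rw [indicator_of_notMem hy, norm_zero]
      exact (exp_pos _).le
  · filter_upwards [hsphere] with y hy
    convert (tendsto_indicator_rescaledGibbs hball h0 hy).const_mul (ψ y) using 2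
    by_cases hy1 : y ∈ ball (0 : E) 1 <;> simp [hy1]

lemma norm_setIntegral_compl_ball_sqrtLogInv_le (hint : Integrable (fun x : E => exp (-f x)))
    {a : ℝ} (hout : ∀ x ∉ ball (0 : E) 1, a < f x) (ψ : BoundedContinuousFunction E ℝ)
    {t : ℝ} (ht : t ∈ Ioo (0 : ℝ) 1) :
    ‖∫ y in (ball (0 : E) (sqrtLogInv t))ᶜ, ψ y * rescaledGibbs f t y‖
      ≤ ‖ψ‖ * (exp (-a * (1 / t - 1)) * sqrtLogInv t ^ Module.finrank ℝ E) * ∫ x, exp (-f x) := by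
  have hc := sqrtLogInv_pos ht
  have hg : Integrable
      (fun y : E => ‖ψ‖ * exp (-a * (1 / t - 1)) * exp (-f ((sqrtLogInv t)⁻¹ • y))) :=
    (hint.comp_smul (inv_ne_zero hc.ne')).const_mul _
  calc ‖∫ y in (ball (0 : E) (sqrtLogInv t))ᶜ, ψ y * rescaledGibbs f t y‖
      ≤ ∫ y in (ball (0 : E) (sqrtLogInv t))ᶜ,
          ‖ψ‖ * exp (-a * (1 / t - 1)) * exp (-f ((sqrtLogInv t)⁻¹ • y)) := by
        refine norm_integral_le_of_norm_le hg.integrableOn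
          ((ae_restrict_iff' measurableSet_ball.compl).2 (Eventually.of_forall fun y hy => ?_))
        have hout_y : a ≤ f ((sqrtLogInv t)⁻¹ • y) := by
          refine (hout _ ?_).le
          rw [mem_ball_zero_iff, norm_smul, norm_inv, norm_of_nonneg hc.le, inv_mul_lt_one₀ hc]
          simpa using hy
        rw [norm_mul, mul_assoc, norm_of_nonneg (r := rescaledGibbs f t y) (exp_pos _).le]
        exact mul_le_mul (ψ.norm_coe_le_norm y) (exp_neg_div_le ht hout_y) (exp_pos _).le
          (norm_nonneg _)
    _ ≤ ∫ y, ‖ψ‖ * exp (-a * (1 / t - 1)) * exp (-f ((sqrtLogInv t)⁻¹ • y)) :=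
        setIntegral_le_integral hg (Eventually.of_forall fun y => by positivity)
    _ = ‖ψ‖ * (exp (-a * (1 / t - 1)) * sqrtLogInv t ^ Module.finrank ℝ E) * ∫ x, exp (-f x) := by
        rw [integral_const_mul,
          Measure.integral_comp_inv_smul_of_nonneg volume (fun x => exp (-f x)) hc.le, smul_eq_mul]
        ring

lemma tendsto_setIntegral_compl_ball_sqrtLogInv (hint : Integrable (fun x : E => exp (-f x)))
    {a : ℝ} (ha : 0 < a) (hout : ∀ x ∉ ball (0 : E) 1, a < f x)
    (ψ : BoundedContinuousFunction E ℝ) :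
    Tendsto (fun t => ∫ y in (ball (0 : E) (sqrtLogInv t))ᶜ, ψ y * rescaledGibbs f t y)
      (𝓝[>] 0) (𝓝 0) := by
  have hbound := ((tendsto_exp_neg_mul_mul_sqrtLogInv_pow ha (Module.finrank ℝ E)).const_mul
    ‖ψ‖).mul_const (∫ x, exp (-f x))
  rw [mul_zero, zero_mul] at hbound
  refine squeeze_zero_norm' ?_ hbound
  filter_upwards [Ioo_zero_one_mem_nhdsGT] with t ht
  exact norm_setIntegral_compl_ball_sqrtLogInv_le hint hout ψ ht

lemma tendsto_integral_mul_rescaledGibbs (hmeas : Measurable f)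
    (hint : Integrable (fun x : E => exp (-f x)))
    (hball : ∀ x ∈ ball (0 : E) 1, x ≠ 0 → f x = exp (-1 / ‖x‖ ^ 2)) (h0 : f 0 = 0)
    {a : ℝ} (ha : 0 < a) (hout : ∀ x ∉ ball (0 : E) 1, a < f x)
    (ψ : BoundedContinuousFunction E ℝ) :
    Tendsto (fun t => ∫ y, ψ y * rescaledGibbs f t y) (𝓝[>] 0)
      (𝓝 (∫ y in ball (0 : E) 1, ψ y)) := by
  have hf0 := nonneg_of_eq_exp_neg_one_div_sq_on_ball hball h0 ha hout
  have hsum := (tendsto_setIntegral_ball_sqrtLogInv hmeas hball h0 hf0 ψ).add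
    (tendsto_setIntegral_compl_ball_sqrtLogInv hint ha hout ψ)
  rw [add_zero] at hsum
  refine hsum.congr' ?_
  filter_upwards [Ioo_zero_one_mem_nhdsGT] with t ht
  refine integral_add_compl measurableSet_ball ?_
  exact (integrable_rescaledGibbs hmeas hint hf0 ht).bdd_mul ψ.continuous.aestronglyMeasurable
    (Eventually.of_forall ψ.norm_coe_le_norm)

end Integral

theorem stmt17_general (d : ℕ) (f : EuclideanSpace ℝ (Fin d) → ℝ)
    (hmeas : Measurable f)
    (hint : Integrable (fun x : EuclideanSpace ℝ (Fin d) => Real.exp (-f x)))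
    (hball : ∀ x ∈ ball (0 : EuclideanSpace ℝ (Fin d)) 1, x ≠ 0 →
      f x = Real.exp (-1 / ‖x‖ ^ 2))
    (h0 : f 0 = 0)
    (a : ℝ) (ha : 0 < a)
    (hout : ∀ x ∉ ball (0 : EuclideanSpace ℝ (Fin d)) 1, a < f x)
    (φ : BoundedContinuousFunction (EuclideanSpace ℝ (Fin d)) ℝ) :
    Tendsto (fun t : ℝ =>
        (∫ x : EuclideanSpace ℝ (Fin d),
            φ ((Real.log (1 / t)) ^ ((1:ℝ) / 2) • x) * Real.exp (-f x / t)) /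
          ∫ x : EuclideanSpace ℝ (Fin d), Real.exp (-f x / t))
      (𝓝[>] 0)
      (𝓝 ((∫ x in ball (0 : EuclideanSpace ℝ (Fin d)) 1, φ x) /
        (volume (ball (0 : EuclideanSpace ℝ (Fin d)) 1)).toReal)) := by
  have hnum := tendsto_integral_mul_rescaledGibbs hmeas hint hball h0 ha hout φ
  have hden := tendsto_integral_mul_rescaledGibbs hmeas hint hball h0 ha hout 1
  simp only [BoundedContinuousFunction.coe_one, Pi.one_apply, one_mul, setIntegral_const,
    smul_eq_mul, mul_one] at hden
  have hvol : (volume (ball (0 : EuclideanSpace ℝ (Fin d)) 1)).toReal ≠ 0 :=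
    (ENNReal.toReal_pos (measure_ball_pos volume 0 one_pos).ne' measure_ball_lt_top.ne).ne'
  refine (hnum.div hden hvol).congr' ?_
  filter_upwards [Ioo_zero_one_mem_nhdsGT] with t ht
  have hden_eq := integral_smul_mul_exp_neg_div (f := f) (fun _ => 1) ht
  simp only [one_mul] at hden_eq
  rw [← sqrt_eq_rpow, ← sqrtLogInv, integral_smul_mul_exp_neg_div _ ht, hden_eq,
    mul_div_mul_left _ _ (inv_ne_zero (pow_pos (sqrtLogInv_pos ht) _).ne')]
  rfl

/-- Infinitely flat minimum: if f(x) = e^{-1/‖x‖²} on the unit ball (f(0)=0),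
f > a > 0 outside, f coercive with e^{-f} integrable, and X_t ~ C_t e^{-f/t}, then
log^{1/2}(1/t)·X_t converges in law to the uniform distribution on the unit ball. -/
theorem stmt17 (d : ℕ) (hd : 1 ≤ d) (f : EuclideanSpace ℝ (Fin d) → ℝ)
    (hmeas : Measurable f)
    (hcoercive : ∀ C : ℝ, ∃ R : ℝ, ∀ x : EuclideanSpace ℝ (Fin d), R ≤ ‖x‖ → C ≤ f x)
    (hint : Integrable (fun x : EuclideanSpace ℝ (Fin d) => Real.exp (-f x)))
    (hball : ∀ x ∈ ball (0 : EuclideanSpace ℝ (Fin d)) 1, x ≠ 0 →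
      f x = Real.exp (-1 / ‖x‖ ^ 2))
    (h0 : f 0 = 0)
    (a : ℝ) (ha : 0 < a)
    (hout : ∀ x ∉ ball (0 : EuclideanSpace ℝ (Fin d)) 1, a < f x)
    (φ : BoundedContinuousFunction (EuclideanSpace ℝ (Fin d)) ℝ) :
    Tendsto (fun t : ℝ =>
        (∫ x : EuclideanSpace ℝ (Fin d),
            φ ((Real.log (1 / t)) ^ ((1:ℝ) / 2) • x) * Real.exp (-f x / t)) /
          ∫ x : EuclideanSpace ℝ (Fin d), Real.exp (-f x / t))
      (𝓝[>] 0)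
      (𝓝 ((∫ x in ball (0 : EuclideanSpace ℝ (Fin d)) 1, φ x) /
        (volume (ball (0 : EuclideanSpace ℝ (Fin d)) 1)).toReal)) :=
  stmt17_general d f hmeas hint hball h0 a ha hout φ
end
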